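/- For every k ≥ 0, s ∈ [[0, 2^k − 1]], and i ∈ [[0, last_{k,s}]], writing r = rev_k(t_{k,s,i}) and l = l_{k,s,i}: X_{k,s,i,0} = {r}, and for every d ∈ [[1, l]], ∪_{j=0}^{d} X_{k,s,i,j} = {r} ∪ ST_{k−1, d−1}(dsc_k(r, (1))). -/

import Mathlib

/-- `revBit k x` is the `k`-bit reversal of `x`:
if `x = (x_{k-1}, …, x_0)₂` then `revBit k x = (x_0, …, x_{k-1})₂`. -/
def revBit (k x : ℕ) : ℕ := ∑ i ∈ Finset.range k, (x / 2 ^ i % 2) * 2 ^ (k - 1 - i)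

/-- `lmax k x = max { l ≤ k | x mod 2^l = 0 }`. -/
def lmax (k x : ℕ) : ℕ := Nat.findGreatest (fun l => x % 2 ^ l = 0) k

/-- The sequence of time slots `t_{k,s,i}`. -/
def tSlot (k s : ℕ) : ℕ → ℕ
  | 0 => s
  | i + 1 => (tSlot k s i + 2 ^ lmax k (tSlot k s i)) % 2 ^ k

/-- `lVal k s i = l_{k,s,i} = max { l ≤ k | t_{k,s,i} mod 2^l = 0 }`. -/
def lVal (k s i : ℕ) : ℕ := lmax k (tSlot k s i)

/-- `lastIdx k s = min { i ≥ 0 | t_{k,s,i} = 0 }`. -/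
noncomputable def lastIdx (k s : ℕ) : ℕ := sInf {i | tSlot k s i = 0}

/-- The segment of time slots `Y_{k,s,i}`: for `i < last` it is
`[[t_{k,s,i}, t_{k,s,i+1} - 1]]` and for `i = last` it is `[[0, 2^k - 1]]`. -/
noncomputable def Yseg (k s i : ℕ) : Set ℕ :=
  if i < lastIdx k s then Set.Icc (tSlot k s i) (tSlot k s (i + 1) - 1)
  else Set.Icc 0 (2 ^ k - 1)

/-- `Ysub k s i l = Y_{k,s,i,l} = [[t_{k,s,i} + ⌊2^{l-1}⌋, t_{k,s,i} + 2^l - 1]]`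
(note `⌊2^{l-1}⌋ = 2^l / 2` for natural `l`). -/
def Ysub (k s i l : ℕ) : Set ℕ :=
  Set.Icc (tSlot k s i + 2 ^ l / 2) (tSlot k s i + 2 ^ l - 1)

/-- `X_{k,s,i,l} = rev_k Y_{k,s,i,l}`, viewed as a set of integers. -/
def XsubZ (k s i l : ℕ) : Set ℤ := (fun y => ((revBit k y : ℕ) : ℤ)) '' Ysub k s i l

/-- `X_{k,s,i} = rev_k Y_{k,s,i}`, viewed as a set of integers. -/
noncomputable def XsegZ (k s i : ℕ) : Set ℤ := (fun y => ((revBit k y : ℕ) : ℤ)) '' Yseg k s i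
/-- The descendant `dsc_k(x, c) = x + ∑_{i=1}^{d} 2^{k-i} · c_i` of `x` by the
path `c = (c_1, …, c_d)`, computed via
`dsc_k(x, (c_1, c_2, …, c_d)) = dsc_{k-1}(x + 2^{k-1}·c_1, (c_2, …, c_d))`. -/
def dsc : ℕ → ℤ → List ℤ → ℤ
  | _, x, [] => x
  | k, x, c :: cs => dsc (k - 1) (x + 2 ^ (k - 1) * c) cs

/-- A path is a sequence over `{-1, 1}`. -/
def IsPath (c : List ℤ) : Prop := ∀ y ∈ c, y = -1 ∨ y = 1

/-- The level at depth `d` rooted at `x`: `L_{k,d}(x) = { dsc_k(x,c) | c ∈ {-1,1}^d }`. -/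
def levelSet (k d : ℕ) (x : ℤ) : Set ℤ :=
  {z : ℤ | ∃ c : List ℤ, c.length = d ∧ IsPath c ∧ z = dsc k x c}

/-- The sub-tree of depth `d` rooted at `x`:
`ST_{k,d}(x) = { dsc_k(x,c) | d' ∈ [[0,d]], c ∈ {-1,1}^{d'} }`. -/
def subTree (k d : ℕ) (x : ℤ) : Set ℤ :=
  {z : ℤ | ∃ c : List ℤ, c.length ≤ d ∧ IsPath c ∧ z = dsc k x c}



lemma sum_pow_rev (k : ℕ) : ∑ i ∈ Finset.range k, 2 ^ (k - 1 - i) = 2 ^ k - 1 := by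
  induction k with
  | zero => simp
  | succ n ih =>
    rw [Finset.sum_range_succ']
    have h1 : ∀ i ∈ Finset.range n, 2 ^ (n + 1 - 1 - (i + 1)) = 2 ^ (n - 1 - i) := by
      intro i hi; congr 1; omega
    rw [Finset.sum_congr rfl h1, ih]
    have := Nat.one_le_two_pow (n := n)
    simp [pow_succ]; omega

lemma revBit_le (k x : ℕ) : revBit k x ≤ 2 ^ k - 1 := by
  calc revBit k x ≤ ∑ i ∈ Finset.range k, 2 ^ (k - 1 - i) := by
        apply Finset.sum_le_sum
        intro i _
        have h : x / 2 ^ i % 2 ≤ 1 := Nat.lt_succ_iff.mp (Nat.mod_lt _ (by norm_num))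
        calc x / 2 ^ i % 2 * 2 ^ (k-1-i) ≤ 1 * 2 ^ (k-1-i) := Nat.mul_le_mul_right _ h
          _ = 2 ^ (k-1-i) := one_mul _
    _ = 2 ^ k - 1 := sum_pow_rev k

lemma revBit_lt (k x : ℕ) : revBit k x < 2 ^ k := by
  have := revBit_le k x; have := Nat.one_le_two_pow (n := k); omega

lemma revBit_succ_lo (k x : ℕ) : revBit (k+1) x = (x % 2) * 2 ^ k + revBit k (x / 2) := by
  rw [revBit, Finset.sum_range_succ', revBit, add_comm]
  congr 1
  · simp
  · apply Finset.sum_congr rfl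
    intro i hi
    simp only [Finset.mem_range] at hi
    rw [Nat.div_div_eq_div_mul, ← pow_succ']
    congr 2
    omega

lemma revBit_succ_hi (k x : ℕ) : revBit (k+1) x = 2 * revBit k x + x / 2 ^ k % 2 := by
  rw [revBit, Finset.sum_range_succ, revBit, Finset.mul_sum]
  congr 1
  · apply Finset.sum_congr rfl
    intro i hi
    simp only [Finset.mem_range] at hi
    have h : k + 1 - 1 - i = (k - 1 - i) + 1 := by omega
    rw [h, pow_succ]
    ring
  · simp

lemma revBit_mod (k x : ℕ) : revBit k (x % 2 ^ k) = revBit k x := by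
  apply Finset.sum_congr rfl
  intro i hi
  simp only [Finset.mem_range] at hi
  congr 1
  have hq : x = 2 ^ i * (2 ^ (k - i) * (x / 2 ^ k)) + x % 2 ^ k := by
    rw [← mul_assoc, ← pow_add]
    have : i + (k - i) = k := by omega
    rw [this]
    exact (Nat.div_add_mod x (2 ^ k)).symm
  have hd : x / 2 ^ i = 2 ^ (k - i) * (x / 2 ^ k) + x % 2 ^ k / 2 ^ i := by
    conv_lhs => rw [hq]
    rw [Nat.mul_add_div (pow_pos (by norm_num : (0:ℕ) < 2) i)]
  have he : 2 ^ (k - i) * (x / 2 ^ k) = 2 * (2 ^ (k - i - 1) * (x / 2 ^ k)) := by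
    rw [← mul_assoc, ← pow_succ']
    congr 2
    omega
  omega

lemma revBit_revBit (k : ℕ) : ∀ x < 2 ^ k, revBit k (revBit k x) = x := by
  induction k with
  | zero => intro x hx; interval_cases x; simp [revBit]
  | succ n ih =>
    intro x hx
    have hy : revBit (n+1) x = 2 * revBit n x + x / 2 ^ n % 2 := revBit_succ_hi n x
    rw [hy, revBit_succ_lo]
    have h1 : (2 * revBit n x + x / 2 ^ n % 2) % 2 = x / 2 ^ n % 2 := by omega
    have h2 : (2 * revBit n x + x / 2 ^ n % 2) / 2 = revBit n x := by omega
    rw [h1, h2, ← revBit_mod n x, ih _ (Nat.mod_lt _ (pow_pos (by norm_num : (0:ℕ) < 2) n))]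
    have hp : (0:ℕ) < 2 ^ n := pow_pos (by norm_num : (0:ℕ) < 2) n
    have hlt : x / 2 ^ n < 2 := by
      rw [Nat.div_lt_iff_lt_mul hp]
      calc x < 2 ^ (n+1) := hx
        _ = 2 * 2 ^ n := by rw [pow_succ]; ring
    have hmod : x / 2 ^ n % 2 = x / 2 ^ n := Nat.mod_eq_of_lt hlt
    rw [hmod, mul_comm]
    exact Nat.div_add_mod x (2 ^ n)

lemma revBit_add (k d t e : ℕ) (hd : d ≤ k) (ht : 2 ^ d ∣ t) (he : e < 2 ^ d) :
    revBit k (t + e) = revBit k t + 2 ^ (k - d) * revBit d e := by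
  obtain ⟨t', rfl⟩ := ht
  have key : ∀ i < k, (2 ^ d * t' + e) / 2 ^ i % 2 =
      (if i < d then e / 2 ^ i % 2 else (2 ^ d * t') / 2 ^ i % 2) := by
    intro i hik
    split_ifs with hid
    · -- i < d : 2^i divides 2^d * t'
      have : 2 ^ d * t' = 2 ^ i * (2 ^ (d - i) * t') := by
        rw [← mul_assoc, ← pow_add]; congr 2; omega
      rw [this, Nat.mul_add_div (pow_pos (by norm_num : (0:ℕ) < 2) i)]
      have : 2 ^ (d - i) * t' = 2 * (2 ^ (d - i - 1) * t') := by
        rw [← mul_assoc, ← pow_succ']; congr 2; omega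
      omega
    · -- i ≥ d
      push_neg at hid
      have h1 : (2 ^ d * t' + e) / 2 ^ d = t' := by
        rw [Nat.mul_add_div (pow_pos (by norm_num : (0:ℕ) < 2) d), Nat.div_eq_of_lt he]
        omega
      have h2 : (2 ^ d * t' + e) / 2 ^ i = t' / 2 ^ (i - d) := by
        have : (2:ℕ) ^ i = 2 ^ d * 2 ^ (i - d) := by rw [← pow_add]; congr 1; omega
        rw [this, ← Nat.div_div_eq_div_mul, h1]
      have h3 : (2 ^ d * t') / 2 ^ i = t' / 2 ^ (i - d) := by
        have : (2:ℕ) ^ i = 2 ^ d * 2 ^ (i - d) := by rw [← pow_add]; congr 1; omega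
        rw [this, ← Nat.div_div_eq_div_mul, Nat.mul_div_cancel_left _ (pow_pos (by norm_num : (0:ℕ) < 2) d)]
      rw [h2, h3]
  have hEbit : ∀ i, i < d → (2 ^ d * t') / 2 ^ i % 2 = 0 := by
    intro i hid
    have h0 : 2 ^ d * t' = 2 ^ i * (2 ^ (d - i) * t') := by
      rw [← mul_assoc, ← pow_add]; congr 2; omega
    rw [h0, Nat.mul_div_cancel_left _ (pow_pos (by norm_num : (0:ℕ) < 2) i)]
    have : 2 ^ (d - i) * t' = 2 * (2 ^ (d - i - 1) * t') := by
      rw [← mul_assoc, ← pow_succ']; congr 2; omega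
    omega
  rw [revBit]
  rw [Finset.sum_congr rfl (fun i hi => by
    rw [key i (Finset.mem_range.mp hi)])]
  rw [Finset.range_eq_Ico, ← Finset.sum_Ico_consecutive _ (Nat.zero_le d) hd]
  have hA : ∑ i ∈ Finset.Ico 0 d, (if i < d then e / 2 ^ i % 2
      else (2 ^ d * t') / 2 ^ i % 2) * 2 ^ (k - 1 - i) = 2 ^ (k - d) * revBit d e := by
    rw [revBit, Finset.mul_sum]
    rw [← Finset.range_eq_Ico]
    apply Finset.sum_congr rfl
    intro i hi
    simp only [Finset.mem_range] at hi
    rw [if_pos hi]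
    have : (2:ℕ) ^ (k - 1 - i) = 2 ^ (k - d) * 2 ^ (d - 1 - i) := by
      rw [← pow_add]; congr 1; omega
    rw [this]; ring
  have hB : ∑ i ∈ Finset.Ico d k, (if i < d then e / 2 ^ i % 2
      else (2 ^ d * t') / 2 ^ i % 2) * 2 ^ (k - 1 - i) = revBit k (2 ^ d * t') := by
    rw [revBit, Finset.range_eq_Ico, ← Finset.sum_Ico_consecutive _ (Nat.zero_le d) hd]
    have hz : ∑ i ∈ Finset.Ico 0 d, (2 ^ d * t') / 2 ^ i % 2 * 2 ^ (k - 1 - i) = 0 := by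
      apply Finset.sum_eq_zero
      intro i hi
      simp only [Finset.mem_Ico] at hi
      rw [hEbit i hi.2]
      ring
    rw [hz, zero_add]
    apply Finset.sum_congr rfl
    intro i hi
    simp only [Finset.mem_Ico] at hi
    rw [if_neg (by omega)]
  rw [hA, hB, add_comm]


lemma dsc_translate (c : List ℤ) : ∀ (j : ℕ) (x : ℤ), dsc j x c = x + dsc j 0 c := by
  induction c with
  | nil => intro j x; simp [dsc]
  | cons c₁ cs ih =>
    intro j x
    show dsc (j-1) (x + 2^(j-1)*c₁) cs = x + dsc (j-1) (0 + 2^(j-1)*c₁) cs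
    rw [ih (j-1) (x + 2^(j-1)*c₁), ih (j-1) (0 + 2^(j-1)*c₁)]
    ring

lemma even_mul_two_pow (c : ℤ) (m : ℕ) (h : m ≠ 0) : Even (c * 2 ^ m) := by
  have h2 : (2:ℤ) ^ m = 2 * 2 ^ (m-1) := by rw [← pow_succ']; congr 1; omega
  exact ⟨c * 2 ^ (m-1), by rw [h2]; ring⟩

lemma dsc_key (m : ℕ) : ∀ j : ℕ, m ≤ j → ∀ z : ℤ,
    (∃ c : List ℤ, c.length = m ∧ IsPath c ∧ z = dsc j 0 c) ↔
    (∃ a : ℤ, |a| ≤ 2 ^ m - 1 ∧ (Odd a ∨ m = 0) ∧ z = a * 2 ^ (j - m)) := by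
  induction m with
  | zero =>
    intro j hj z
    constructor
    · rintro ⟨c, hc, -, rfl⟩
      rw [List.length_eq_zero_iff] at hc; subst hc
      exact ⟨0, by simp, Or.inr rfl, by simp [dsc]⟩
    · rintro ⟨a, ha, -, rfl⟩
      have h0 : a = 0 := by simpa using abs_nonpos_iff.mp (by simpa using ha)
      exact ⟨[], rfl, by intro y hy; simp at hy, by simp [dsc, h0]⟩
  | succ m ih =>
    intro j hj z
    have hm : m ≤ j - 1 := by omega
    have hjm : j - 1 - m = j - (m + 1) := by omega
    have hpow : (2:ℤ) ^ (j - 1) = 2 ^ m * 2 ^ (j - 1 - m) := by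
      rw [← pow_add]; congr 1; omega
    have hp0 : (0:ℤ) < 2 ^ m := by positivity
    have hp1 : (1:ℤ) ≤ 2 ^ m := hp0
    constructor
    · rintro ⟨c, hc, hp, rfl⟩
      cases c with
      | nil => simp at hc
      | cons c₁ cs =>
        have hcs : cs.length = m := by simpa using hc
        have hpath : IsPath cs := fun y hy => hp y (List.mem_cons_of_mem _ hy)
        have hc₁ : c₁ = -1 ∨ c₁ = 1 := hp c₁ (List.mem_cons_self)
        obtain ⟨a, ha1, ha2, ha3⟩ := (ih (j-1) hm (dsc (j-1) 0 cs)).mp ⟨cs, hcs, hpath, rfl⟩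
        refine ⟨c₁ * 2 ^ m + a, ?_, ?_, ?_⟩
        · rcases abs_le.mp ha1 with ⟨hl, hr⟩
          have h2 : (2:ℤ) ^ (m+1) = 2 * 2 ^ m := by ring
          rw [abs_le, h2]
          rcases hc₁ with rfl | rfl <;> constructor <;> omega
        · left
          rcases ha2 with hodd | rfl
          · have hmpos : m ≠ 0 := by
              rintro rfl
              have : a = 0 := by simpa using abs_nonpos_iff.mp (by simpa using ha1)
              exact (by simp [this] at hodd)
            exact (even_mul_two_pow c₁ m hmpos).add_odd hodd
          · have ha0 : a = 0 := by simpa using abs_nonpos_iff.mp (by simpa using ha1)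
            rcases hc₁ with rfl | rfl <;> simp [ha0] <;> decide
        · show dsc (j-1) (0 + 2^(j-1)*c₁) cs = _
          rw [dsc_translate, ha3, hpow, hjm]
          ring
    · rintro ⟨b, hb1, hb2, rfl⟩
      have hbodd : Odd b := hb2.resolve_right (by omega)
      obtain ⟨w, rfl⟩ := hbodd
      set c₁ : ℤ := if 0 ≤ w then 1 else -1 with hc₁def
      have hc₁ : c₁ = -1 ∨ c₁ = 1 := by unfold c₁; split <;> simp
      set a : ℤ := (2*w+1) - c₁ * 2 ^ m with hadef
      have ha1 : |a| ≤ 2 ^ m - 1 := by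
        rcases abs_le.mp hb1 with ⟨hl, hr⟩
        rw [abs_le]
        have h2 : (2:ℤ)^(m+1) = 2 * 2^m := by ring
        rw [h2] at hl hr
        unfold a c₁
        split <;> constructor <;> omega
      have ha2 : Odd a ∨ m = 0 := by
        rcases Nat.eq_zero_or_pos m with rfl | hm0
        · right; rfl
        · left
          have heven : Even (c₁ * 2 ^ m) := even_mul_two_pow c₁ m (by omega)
          have : Odd (2*w+1) := ⟨w, rfl⟩
          simpa [hadef] using this.sub_even heven
      obtain ⟨cs, hcs, hpath, hval⟩ := (ih (j-1) hm (a * 2 ^ (j-1-m))).mpr ⟨a, ha1, ha2, rfl⟩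
      refine ⟨c₁ :: cs, by simp [hcs], ?_, ?_⟩
      · intro y hy
        rcases List.mem_cons.mp hy with rfl | hy
        · exact hc₁
        · exact hpath y hy
      · show _ = dsc (j-1) (0 + 2^(j-1)*c₁) cs
        rw [dsc_translate, ← hval, hpow, hjm]
        unfold a
        ring

lemma subTree_eq (e j : ℕ) (he : e ≤ j) (x : ℤ) :
    subTree j e (x + 2 ^ j) =
      {z : ℤ | ∃ b : ℤ, 1 ≤ b ∧ b ≤ 2 ^ (e + 1) - 1 ∧ z = x + b * 2 ^ (j - e)} := by
  ext z
  simp only [subTree, Set.mem_setOf_eq]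
  constructor
  · rintro ⟨c, hlen, hpath, rfl⟩
    set m := c.length with hmdef
    have hme : m ≤ e := hlen
    have hm : m ≤ j := le_trans hme he
    obtain ⟨a, ha1, ha2, ha3⟩ := (dsc_key m j hm (dsc j 0 c)).mp ⟨c, rfl, hpath, rfl⟩
    rcases abs_le.mp ha1 with ⟨hal, har⟩
    have hp0 : (0:ℤ) < 2 ^ m := by positivity
    have hsplit1 : (2:ℤ) ^ (e+1) = 2 ^ (m+1) * 2 ^ (e - m) := by
      rw [← pow_add]; congr 1; omega
    have hsplit2 : (2:ℤ) ^ (e+1) = 2 ^ (e - m) + (2 ^ (m+1) - 1) * 2 ^ (e - m) := by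
      rw [hsplit1]; ring
    have hq0 : (0:ℤ) < 2 ^ (e - m) := by positivity
    refine ⟨(2 ^ m + a) * 2 ^ (e - m), ?_, ?_, ?_⟩
    · nlinarith
    · have h1 : (2:ℤ) ^ m + a ≤ 2 ^ (m+1) - 1 := by
        have : (2:ℤ) ^ (m+1) = 2 * 2 ^ m := by ring
        omega
      nlinarith
    · rw [dsc_translate, ha3]
      have h2 : (2:ℤ) ^ j = 2 ^ m * 2 ^ (j - m) := by rw [← pow_add]; congr 1; omega
      have h3 : (2:ℤ) ^ (j - m) = 2 ^ (e - m) * 2 ^ (j - e) := by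
        rw [← pow_add]; congr 1; omega
      rw [h2, h3]; ring
  · rintro ⟨b, hb1, hb2, rfl⟩
    set bn := b.toNat with hbndef
    have hbn : (bn : ℤ) = b := Int.toNat_of_nonneg (by omega)
    have hbn0 : bn ≠ 0 := by omega
    obtain ⟨v, o, ho2, hbo⟩ := Nat.exists_eq_pow_mul_and_not_dvd hbn0 2 (by norm_num)
    have hoodd : Odd o := Nat.odd_iff.mpr (Nat.two_dvd_ne_zero.mp ho2)
    have ho1 : 1 ≤ o := hoodd.pos
    have hbe : bn ≤ 2 ^ (e+1) - 1 := by
      have hcast : ((2 ^ (e+1) - 1 : ℕ) : ℤ) = 2 ^ (e+1) - 1 := by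
        have := Nat.one_le_two_pow (n := e+1)
        push_cast [this]
        ring
      have h1 : (bn : ℤ) ≤ ((2 ^ (e+1) - 1 : ℕ) : ℤ) := by
        rw [hbn, hcast]; exact hb2
      exact_mod_cast h1
    have hv : v ≤ e := by
      by_contra hve
      push_neg at hve
      have hA : 2 ^ (e+1) ≤ 2 ^ v := Nat.pow_le_pow_right (by norm_num) (by omega)
      have hB : 2 ^ v ≤ bn := by
        calc 2 ^ v ≤ 2 ^ v * o := Nat.le_mul_of_pos_right _ ho1
          _ = bn := hbo.symm
      omega
    set m := e - v with hmdef
    have hm : m ≤ j := by omega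
    have holt : o < 2 ^ (m + 1) := by
      by_contra hol
      push_neg at hol
      have h1 : 2 ^ v * 2 ^ (m+1) ≤ 2 ^ v * o := Nat.mul_le_mul_left _ hol
      have h2 : 2 ^ v * 2 ^ (m+1) = 2 ^ (e+1) := by rw [← pow_add]; congr 1; omega
      omega
    set a : ℤ := (o : ℤ) - 2 ^ m with hadef
    have hp0 : (0:ℤ) < 2 ^ m := by positivity
    have ha1 : |a| ≤ 2 ^ m - 1 := by
      rw [abs_le]
      have ho2m : (o:ℤ) ≤ 2 * 2 ^ m - 1 := by
        have : (o:ℤ) < ((2:ℕ) ^ (m+1) : ℤ) := by exact_mod_cast holt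
        have h2 : ((2:ℕ) ^ (m+1) : ℤ) = 2 * 2 ^ m := by push_cast; ring
        omega
      have ho1' : (1:ℤ) ≤ (o:ℤ) := by exact_mod_cast ho1
      constructor <;> omega
    have ha2 : Odd a ∨ m = 0 := by
      rcases Nat.eq_zero_or_pos m with hm0 | hm0
      · right; exact hm0
      · left
        have hoz : Odd ((o:ℤ)) := (Int.odd_coe_nat o).mpr hoodd
        have hev : Even ((2:ℤ) ^ m) := by simpa using even_mul_two_pow 1 m (by omega)
        simpa [hadef] using hoz.sub_even hev
    obtain ⟨c, hclen, hcpath, hcval⟩ :=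
      (dsc_key m j hm (a * 2 ^ (j - m))).mpr ⟨a, ha1, ha2, rfl⟩
    refine ⟨c, by omega, hcpath, ?_⟩
    rw [dsc_translate, ← hcval]
    have h2 : (2:ℤ) ^ j = 2 ^ m * 2 ^ (j - m) := by rw [← pow_add]; congr 1; omega
    have h3 : (2:ℤ) ^ (j - m) = 2 ^ v * 2 ^ (j - e) := by rw [← pow_add]; congr 1; omega
    have hb' : b = (o : ℤ) * 2 ^ v := by
      rw [← hbn, hbo]; push_cast; ring
    rw [h2, h3, hb', hadef]
    push_cast
    ring

lemma Ysub_union_Icc (t : ℕ) : ∀ d : ℕ,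
    (⋃ j ∈ Finset.range (d+1), Set.Icc (t + 2 ^ j / 2) (t + 2 ^ j - 1)) =
      Set.Icc t (t + 2 ^ d - 1) := by
  intro d
  induction d with
  | zero => simp
  | succ n ih =>
    rw [Finset.range_add_one, Finset.set_biUnion_insert, ih]
    ext y
    simp only [Set.mem_union, Set.mem_Icc]
    have h1 : (2:ℕ) ^ (n+1) = 2 * 2 ^ n := by ring
    have h2 : (1:ℕ) ≤ 2 ^ n := Nat.one_le_two_pow
    rw [h1]
    omega

/-- Lemma (X-BST, part a): writing `r = rev_k(t_{k,s,i})` and `l = l_{k,s,i}`,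
we have `X_{k,s,i,0} = {r}` and, for `d ∈ [[1, l]]`,
`⋃_{j=0}^{d} X_{k,s,i,j} = {r} ∪ ST_{k-1, d-1}(dsc_k(r, (1)))`. -/
theorem stmt_13 (k s i : ℕ) (hs : s < 2 ^ k) (hi : i ≤ lastIdx k s) :
    XsubZ k s i 0 = {((revBit k (tSlot k s i) : ℕ) : ℤ)} ∧
    ∀ d : ℕ, 1 ≤ d → d ≤ lVal k s i →
      (⋃ j ∈ Finset.range (d + 1), XsubZ k s i j) =
        {((revBit k (tSlot k s i) : ℕ) : ℤ)} ∪
          subTree (k - 1) (d - 1) (dsc k ((revBit k (tSlot k s i) : ℕ) : ℤ) [1]) := by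
  set t := tSlot k s i with htdef
  constructor
  · show (fun y => ((revBit k y : ℕ) : ℤ)) '' Set.Icc (t + 2 ^ 0 / 2) (t + 2 ^ 0 - 1) = _
    norm_num
  · intro d hd1 hd2
    have hlk : lVal k s i ≤ k := Nat.findGreatest_le k
    have hdk : d ≤ k := le_trans hd2 hlk
    have hk1 : 1 ≤ k := le_trans hd1 hdk
    have ht2 : 2 ^ d ∣ t := by
      refine dvd_trans (pow_dvd_pow 2 hd2) (Nat.dvd_of_mod_eq_zero ?_)
      show t % 2 ^ Nat.findGreatest (fun l => t % 2 ^ l = 0) k = 0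
      exact Nat.findGreatest_spec (P := fun l => t % 2 ^ l = 0) (Nat.zero_le k) (Nat.mod_one t)
    have hdsc : dsc k ((revBit k t : ℕ) : ℤ) [1] = ((revBit k t : ℕ) : ℤ) + 2 ^ (k - 1) := by
      show dsc (k-1) _ [] = _
      simp [dsc]
    rw [hdsc]
    have hsub := subTree_eq (d - 1) (k - 1) (by omega) ((revBit k t : ℕ) : ℤ)
    rw [hsub]
    have he1 : d - 1 + 1 = d := by omega
    have he2 : k - 1 - (d - 1) = k - d := by omega
    rw [he1, he2]
    have himg : (⋃ j ∈ Finset.range (d + 1), XsubZ k s i j) =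
        (fun y => ((revBit k y : ℕ) : ℤ)) '' Set.Icc t (t + 2 ^ d - 1) := by
      rw [← Ysub_union_Icc t d]
      simp only [XsubZ, Ysub, ← htdef]
      exact (Set.image_iUnion₂ _ _).symm
    rw [himg]
    have hp2 : (1:ℕ) ≤ 2 ^ d := Nat.one_le_two_pow
    have hcast : ((2 ^ d - 1 : ℕ) : ℤ) = 2 ^ d - 1 := by push_cast [hp2]; ring
    ext z
    simp only [Set.mem_image, Set.mem_Icc, Set.mem_union, Set.mem_singleton_iff,
      Set.mem_setOf_eq]
    constructor
    · rintro ⟨y, ⟨hy1, hy2⟩, rfl⟩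
      set e := y - t with hedef
      have hy : y = t + e := by omega
      have he : e < 2 ^ d := by omega
      have hr : revBit k y = revBit k t + 2 ^ (k - d) * revBit d e := by
        rw [hy]; exact revBit_add k d t e hdk ht2 he
      rcases Nat.eq_zero_or_pos (revBit d e) with h0 | h0
      · left; rw [hr, h0]; norm_num
      · right
        refine ⟨((revBit d e : ℕ) : ℤ), by exact_mod_cast h0, ?_, ?_⟩
        · have := revBit_le d e
          have h3 : ((revBit d e : ℕ) : ℤ) ≤ ((2 ^ d - 1 : ℕ) : ℤ) := by exact_mod_cast this
          rw [hcast] at h3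
          exact h3
        · rw [hr]; push_cast; ring
    · rintro (rfl | ⟨b, hb1, hb2, rfl⟩)
      · exact ⟨t, ⟨le_refl t, by omega⟩, rfl⟩
      · set bn := b.toNat with hbndef
        have hbn : (bn : ℤ) = b := Int.toNat_of_nonneg (by omega)
        have hbnlt : bn < 2 ^ d := by
          have h3 : (bn : ℤ) ≤ ((2 ^ d - 1 : ℕ) : ℤ) := by rw [hbn, hcast]; exact hb2
          have h4 : bn ≤ 2 ^ d - 1 := by exact_mod_cast h3
          omega
        refine ⟨t + revBit d bn, ⟨by omega, by have := revBit_le d bn; omega⟩, ?_⟩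
        have hr : revBit k (t + revBit d bn) = revBit k t + 2 ^ (k - d) * bn := by
          rw [revBit_add k d t (revBit d bn) hdk ht2 (revBit_lt d bn),
            revBit_revBit d bn hbnlt]
        rw [hr]
        push_cast [hbn]
        ring
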